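/- arXiv:2411.01845 — 4 statements merged into one kernel-verified Lean document; each statement's English description precedes it below -/
import Mathlib

section
/- Let ρ = β + iγ be a complex number with β > 0, and let x, y be real numbers with 0 < y ≤ x/2. Then | (x^ρ − (x−y)^ρ)/ρ | ≤ 2 y x^{β − 1}, where z^ρ denotes the principal complex power of a positive real number z. -/
open Complex Filter Asymptotics Set

open Classical in
/-- Multiplicity of a zero of the Riemann zeta function (the order of vanishing). -/
noncomputable def zetaZeroMult (ρ : ℂ) : ℕ :=
  if h : AnalyticAt ℂ riemannZeta ρ then (analyticOrderAt riemannZeta ρ).toNat else 0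

/-- `zetaN σ T`: the number of zeros of the Riemann zeta function, counted with
multiplicity, in the rectangle `σ ≤ Re ρ ≤ 1`, `0 < Im ρ ≤ T`. -/
noncomputable def zetaN (σ T : ℝ) : ℕ :=
  ∑ᶠ ρ ∈ {ρ : ℂ | riemannZeta ρ = 0 ∧ σ ≤ ρ.re ∧ ρ.re ≤ 1 ∧ 0 < ρ.im ∧ ρ.im ≤ T},
    zetaZeroMult ρ

/-- The Dirichlet polynomial `∑_{M ≤ m < 2M} a m * m^{-s}`. -/
noncomputable def dPoly (a : ℕ → ℝ) (M : ℝ) (s : ℂ) : ℂ :=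
  ∑ᶠ m ∈ {m : ℕ | M ≤ (m : ℝ) ∧ (m : ℝ) < 2 * M}, (a m : ℂ) * (m : ℂ) ^ (-s)

/-- The prime-counting function of a real argument: the number of primes `≤ x`. -/
noncomputable def piR (x : ℝ) : ℝ := (Nat.primeCounting ⌊x⌋₊ : ℝ)

/-! Write `(x^ρ - (x-y)^ρ)/ρ` as `∫_{x-y}^x t^{ρ-1} dt`. On `[x/2, x]` the integrand has
modulus `t^{β-1} ≤ 2 x^{β-1}`: for `β ≥ 1` it is increasing in `t`, and for `β < 1` it is at
most `(x/2)^{β-1} = 2^{1-β} x^{β-1}` with `1 - β < 1`. The interval has length `y`. -/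

lemma Real.rpow_le_two_mul_rpow_of_half_le {e t x : ℝ} (he : -1 ≤ e) (hx : 0 < x)
    (hxt : x / 2 ≤ t) (htx : t ≤ x) : t ^ e ≤ 2 * x ^ e := by
  have hxe : 0 ≤ x ^ e := Real.rpow_nonneg hx.le e
  rcases le_or_gt 0 e with he0 | he0
  · linarith [Real.rpow_le_rpow (by linarith) htx he0]
  · have h2e : (2 : ℝ)⁻¹ ≤ 2 ^ e := by
      simpa [Real.rpow_neg_one] using
        Real.rpow_le_rpow_of_exponent_le (by norm_num : (1 : ℝ) ≤ 2) he
    calc t ^ e ≤ (x / 2) ^ e := Real.rpow_le_rpow_of_nonpos (by positivity) hxt he0.le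
      _ = x ^ e / 2 ^ e := Real.div_rpow hx.le zero_le_two e
      _ ≤ x ^ e / 2⁻¹ := div_le_div_of_nonneg_left hxe (by norm_num) h2e
      _ = 2 * x ^ e := by ring

lemma Complex.sub_cpow_div_eq_integral {s : ℂ} (hs : 0 < s.re) (a b : ℝ) :
    ((b : ℂ) ^ s - (a : ℂ) ^ s) / s = ∫ t : ℝ in a..b, (t : ℂ) ^ (s - 1) := by
  rw [integral_cpow (Or.inl (by simpa using hs)), sub_add_cancel]

/-- The mean-value bound `|(x^ρ - (x-y)^ρ)/ρ| ≤ 2 y x^{β-1}` for `0 < y ≤ x/2`. -/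
theorem stmt_12 (ρ : ℂ) (x y : ℝ) (hβ : 0 < ρ.re) (hy : 0 < y) (hyx : y ≤ x / 2) :
    ‖((x : ℂ) ^ ρ - ((x - y : ℝ) : ℂ) ^ ρ) / ρ‖ ≤ 2 * y * x ^ (ρ.re - 1) := by
  have hx : 0 < x := by linarith
  have hbound : ∀ t ∈ uIoc (x - y) x, ‖(t : ℂ) ^ (ρ - 1)‖ ≤ 2 * x ^ (ρ.re - 1) := by
    intro t ht
    obtain ⟨hlt, hle⟩ : x - y < t ∧ t ≤ x := by rwa [uIoc_of_le (by linarith)] at ht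
    rw [norm_cpow_eq_rpow_re_of_pos (by linarith), sub_re, one_re]
    exact Real.rpow_le_two_mul_rpow_of_half_le (by linarith) hx (by linarith) hle
  calc ‖((x : ℂ) ^ ρ - ((x - y : ℝ) : ℂ) ^ ρ) / ρ‖
      = ‖∫ t : ℝ in (x - y)..x, (t : ℂ) ^ (ρ - 1)‖ := by
        rw [sub_cpow_div_eq_integral hβ]
    _ ≤ 2 * x ^ (ρ.re - 1) * |x - (x - y)| :=
        intervalIntegral.norm_integral_le_of_norm_le_const hbound
    _ = 2 * y * x ^ (ρ.re - 1) := by rw [sub_sub_cancel, abs_of_pos hy]; ring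
end

section
/- Let x > 1 and let E, σ, u, v be real numbers with E > 0. Set M = x^u and N = x^v. If (1/2)·max(0, log_x E − u) + (1/2)·max(0, log_x E − v) ≤ (1 − u − v)(1 − σ), then M^{1/2 − σ} N^{1/2 − σ} (M + E)^{1/2} (N + E)^{1/2} ≤ 2 x^{1 − σ}. -/
open Complex Filter Asymptotics Set

/-! Write `E = x ^ e` with `e = log_x E`. Bounding `x ^ w + x ^ e ≤ 2 x ^ max w e` and
`max w e = w + max 0 (e - w)`, each factor `(x ^ w) ^ (1/2 - σ) (x ^ w + E) ^ (1/2)` is at most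
`√2 · x ^ (w (1 - σ) + max 0 (e - w) / 2)`; the hypothesis says exactly that the two exponents
add up to at most `1 - σ`. -/

namespace Real

lemma rpow_add_rpow_le_two_mul_rpow_max {x : ℝ} (hx : 1 ≤ x) (a b : ℝ) :
    x ^ a + x ^ b ≤ 2 * x ^ max a b := by
  rw [two_mul]
  gcongr
  exacts [le_max_left a b, le_max_right a b]

lemma rpow_rpow_mul_rpow_add_rpow_half_le {x : ℝ} (hx : 1 ≤ x) (w e s : ℝ) :
    (x ^ w) ^ (1 / 2 - s) * (x ^ w + x ^ e) ^ ((1 : ℝ) / 2)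
      ≤ √2 * x ^ (w * (1 - s) + max 0 (e - w) / 2) := by
  have hx0 : 0 < x := zero_lt_one.trans_le hx
  have hmax : max w e = w + max 0 (e - w) := by
    rw [← max_add_add_left, add_zero, add_sub_cancel]
  calc (x ^ w) ^ (1 / 2 - s) * (x ^ w + x ^ e) ^ ((1 : ℝ) / 2)
      ≤ x ^ (w * (1 / 2 - s)) * (2 * x ^ max w e) ^ ((1 : ℝ) / 2) := by
        rw [← rpow_mul hx0.le]
        gcongr
        exact rpow_add_rpow_le_two_mul_rpow_max hx w e
    _ = √2 * x ^ (w * (1 - s) + max 0 (e - w) / 2) := by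
        rw [mul_rpow zero_le_two (by positivity), ← sqrt_eq_rpow, ← rpow_mul hx0.le, hmax,
          mul_left_comm, ← rpow_add hx0]
        ring_nf

end Real

/-- The inequality on exponents implies the bound
`M^{1/2-σ} N^{1/2-σ} (M+E)^{1/2} (N+E)^{1/2} ≤ 2 x^{1-σ}`. -/
theorem stmt_13 (x E σ u v : ℝ) (hx : 1 < x) (hE : 0 < E)
    (h : 1 / 2 * max 0 (Real.logb x E - u) + 1 / 2 * max 0 (Real.logb x E - v)
      ≤ (1 - u - v) * (1 - σ)) :
    (x ^ u) ^ (1 / 2 - σ) * (x ^ v) ^ (1 / 2 - σ) *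
      (x ^ u + E) ^ ((1 : ℝ) / 2) * (x ^ v + E) ^ ((1 : ℝ) / 2)
      ≤ 2 * x ^ (1 - σ) := by
  set e := Real.logb x E
  have hEx : E = x ^ e := (Real.rpow_logb (by linarith) hx.ne' hE).symm
  calc (x ^ u) ^ (1 / 2 - σ) * (x ^ v) ^ (1 / 2 - σ) *
        (x ^ u + E) ^ ((1 : ℝ) / 2) * (x ^ v + E) ^ ((1 : ℝ) / 2)
      = ((x ^ u) ^ (1 / 2 - σ) * (x ^ u + x ^ e) ^ ((1 : ℝ) / 2)) *
          ((x ^ v) ^ (1 / 2 - σ) * (x ^ v + x ^ e) ^ ((1 : ℝ) / 2)) := by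
        rw [hEx]; ring
    _ ≤ (√2 * x ^ (u * (1 - σ) + max 0 (e - u) / 2)) *
          (√2 * x ^ (v * (1 - σ) + max 0 (e - v) / 2)) := by
        have hbound := Real.rpow_rpow_mul_rpow_add_rpow_half_le hx.le (e := e) (s := σ)
        exact mul_le_mul (hbound u) (hbound v) (by positivity) (by positivity)
    _ = 2 * x ^ (u * (1 - σ) + max 0 (e - u) / 2 + (v * (1 - σ) + max 0 (e - v) / 2)) := by
        rw [Real.rpow_add (by linarith) (u * (1 - σ) + max 0 (e - u) / 2)]
        linear_combination (x ^ (u * (1 - σ) + max 0 (e - u) / 2) *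
          x ^ (v * (1 - σ) + max 0 (e - v) / 2)) * Real.mul_self_sqrt zero_le_two
    _ ≤ 2 * x ^ (1 - σ) := by
        gcongr
        · exact hx.le
        · linarith
end

section
/- Let 1/2 ≤ θ < 1, 1/2 < σ₀ < 1, and let u, v ≥ 0 be real numbers satisfying (A1) (2σ₀ − 2θ)/(2σ₀ − 1) ≤ u + v ≤ 1, (A2) u(2 − 2σ₀) + v(1 − 2σ₀) ≤ θ + 1 − 2σ₀, and (A3) v(2 − 2σ₀) + u(1 − 2σ₀) ≤ θ + 1 − 2σ₀. Then for every σ with 0 ≤ σ ≤ σ₀, (1/2)·max(0, 1 − θ − u) + (1/2)·max(0, 1 − θ − v) ≤ (1 − u − v)(1 − σ). -/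
/-
Since 1 - u - v ≥ 0, the right-hand side only grows as σ decreases, so it suffices to take
σ = σ₀. Doubled, the claim is then max(0, a) + max(0, b) ≤ c with a = 1 - θ - u,
b = 1 - θ - v and c = 2(1 - u - v)(1 - σ₀), and each of its four cases is one hypothesis:
c ≥ 0 by u + v ≤ 1 and σ₀ < 1, a ≤ c is (A3), b ≤ c is (A2), and a + b ≤ c is the lower
bound in (A1) with its positive denominator 2σ₀ - 1 cleared.
-/

open Complex Filter Asymptotics Set

theorem max_zero_add_max_zero_le {α : Type*} [AddCommMonoid α] [LinearOrder α]
    [IsOrderedAddMonoid α] {a b c : α} (h0 : 0 ≤ c) (ha : a ≤ c) (hb : b ≤ c)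
    (hab : a + b ≤ c) : max 0 a + max 0 b ≤ c := by
  rw [max_add, zero_add, add_max, add_zero]
  exact max_le (max_le h0 hb) (max_le ha hab)

theorem stmt_14_general (θ σ₀ u v : ℝ)
    (hσ₀ : 1 / 2 < σ₀) (hσ₀1 : σ₀ < 1)
    (hA1l : (2 * σ₀ - 2 * θ) / (2 * σ₀ - 1) ≤ u + v) (hA1u : u + v ≤ 1)   -- (A1)
    (hA2 : u * (2 - 2 * σ₀) + v * (1 - 2 * σ₀) ≤ θ + 1 - 2 * σ₀)          -- (A2)
    (hA3 : v * (2 - 2 * σ₀) + u * (1 - 2 * σ₀) ≤ θ + 1 - 2 * σ₀) :        -- (A3)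
    ∀ σ : ℝ, 0 ≤ σ → σ ≤ σ₀ →
      1 / 2 * max 0 (1 - θ - u) + 1 / 2 * max 0 (1 - θ - v)
        ≤ (1 - u - v) * (1 - σ) := by
  intro σ _ hσ
  have hA1 : 2 * σ₀ - 2 * θ ≤ (u + v) * (2 * σ₀ - 1) :=
    (div_le_iff₀ (by linarith)).1 hA1l
  have hσ₀_case : max 0 (1 - θ - u) + max 0 (1 - θ - v) ≤ 2 * ((1 - u - v) * (1 - σ₀)) :=
    max_zero_add_max_zero_le
      (mul_nonneg zero_le_two (mul_nonneg (by linarith) (by linarith)))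
      (by linarith) (by linarith) (by linarith)
  have hmono : (1 - u - v) * (1 - σ₀) ≤ (1 - u - v) * (1 - σ) :=
    mul_le_mul_of_nonneg_left (by linarith) (by linarith)
  linarith

/-- Case 1 (`0 ≤ σ ≤ σ₀`) of the exponent inequality in Lemma 3.1. -/
theorem stmt_14 (θ σ₀ u v : ℝ)
    (hθ : 1 / 2 ≤ θ) (hθ1 : θ < 1) (hσ₀ : 1 / 2 < σ₀) (hσ₀1 : σ₀ < 1)
    (hu : 0 ≤ u) (hv : 0 ≤ v)
    (hA1l : (2 * σ₀ - 2 * θ) / (2 * σ₀ - 1) ≤ u + v) (hA1u : u + v ≤ 1)   -- (A1)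
    (hA2 : u * (2 - 2 * σ₀) + v * (1 - 2 * σ₀) ≤ θ + 1 - 2 * σ₀)          -- (A2)
    (hA3 : v * (2 - 2 * σ₀) + u * (1 - 2 * σ₀) ≤ θ + 1 - 2 * σ₀) :        -- (A3)
    ∀ σ : ℝ, 0 ≤ σ → σ ≤ σ₀ →
      1 / 2 * max 0 (1 - θ - u) + 1 / 2 * max 0 (1 - θ - v)
        ≤ (1 - u - v) * (1 - σ) :=
  stmt_14_general θ σ₀ u v hσ₀ hσ₀1 hA1l hA1u hA2 hA3
end

section
/- Let 1/2 ≤ θ < 1 and 1/2 < σ₀ < 1 with θ ≤ (3 − 2σ₀)/(7 − 6σ₀), and let A : [σ₀, 1] → ℝ be a non-negative, non-increasing function with A(σ₀) = 1/(2(1−σ₀)). Let u, v ≥ 0 be real numbers satisfying (A1) (2σ₀ − 2θ)/(2σ₀ − 1) ≤ u + v ≤ 1, (A2) u(2 − 2σ₀) + v(1 − 2σ₀) ≤ θ + 1 − 2σ₀, and (A3) v(2 − 2σ₀) + u(1 − 2σ₀) ≤ θ + 1 − 2σ₀. Then for every σ with σ₀ ≤ σ < 1, (1/2)·max(0, (1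 − θ)(1/2 + A(σ)(1 − σ)) − u) + (1/2)·max(0, (1 − θ)(1/2 + A(σ)(1 − σ)) − v) ≤ (1 − u − v)(1 − σ). -/
open Complex Filter Asymptotics Set

/-!
Write `t = 1 - σ`, `s = 1 - σ₀` and `λ = t / s ∈ (0, 1]`. Since `A σ ≤ A σ₀ = 1 / (2s)`, the
quantity `E = (1 - θ)(1/2 + A σ t)` is at most the convex combination
`(1 - λ) (1 - θ)/2 + λ (1 - θ)`. The left-hand side `φ(E)`, with
`φ x = ½ max 0 (x - u) + ½ max 0 (x - v)`, is monotone and convex in `E`, and `φ((1 - θ)/2) = 0`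
because (A1), (A2), (A3) and the bound on `θ` force `1 - θ ≤ 2u, 2v`. Hence
`φ(E) ≤ λ φ(1 - θ)`, and `φ(1 - θ) ≤ (1 - u - v) s` is, case by case on the two maxima,
exactly (A1), (A2) or (A3).
-/

lemma max_zero_sub_le_mul_max_zero_sub {a b x u l : ℝ} (hl₀ : 0 ≤ l) (hl₁ : l ≤ 1)
    (ha : a ≤ u) (hx : x ≤ (1 - l) * a + l * b) :
    max 0 (x - u) ≤ l * max 0 (b - u) := by
  refine max_le (mul_nonneg hl₀ (le_max_left _ _)) ?_
  calc x - u ≤ l * (b - u) := by linarith [mul_nonneg (sub_nonneg.2 hl₁) (sub_nonneg.2 ha)]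
    _ ≤ l * max 0 (b - u) := mul_le_mul_of_nonneg_left (le_max_right _ _) hl₀

lemma one_sub_le_two_mul_of_constraints {θ σ₀ u v : ℝ} (hσ₀ : 1 / 2 < σ₀) (hσ₀1 : σ₀ < 1)
    (hθ : θ * (7 - 6 * σ₀) ≤ 3 - 2 * σ₀)
    (hA1 : 2 * σ₀ - 2 * θ ≤ (u + v) * (2 * σ₀ - 1))
    (hA3 : v * (2 - 2 * σ₀) + u * (1 - 2 * σ₀) ≤ θ + 1 - 2 * σ₀) :
    1 - θ ≤ 2 * u := by
  -- eliminating `v` from (A1) and (A3) gives `(2σ₀ - 1)(2u - (1 - θ)) ≥ 3 - 2σ₀ - θ(7 - 6σ₀) ≥ 0`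
  have key : 0 ≤ (2 * σ₀ - 1) * (2 * u - (1 - θ)) := by
    nlinarith [mul_le_mul_of_nonneg_left hA1 (by linarith : (0 : ℝ) ≤ 2 - 2 * σ₀),
      mul_le_mul_of_nonneg_left hA3 (by linarith : (0 : ℝ) ≤ 2 * σ₀ - 1)]
  linarith [nonneg_of_mul_nonneg_right key (by linarith)]

lemma half_max_add_half_max_le_of_constraints {θ σ₀ u v : ℝ}
    (hA1l : 2 * σ₀ - 2 * θ ≤ (u + v) * (2 * σ₀ - 1)) (hA1u : u + v ≤ 1)
    (hA2 : u * (2 - 2 * σ₀) + v * (1 - 2 * σ₀) ≤ θ + 1 - 2 * σ₀)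
    (hA3 : v * (2 - 2 * σ₀) + u * (1 - 2 * σ₀) ≤ θ + 1 - 2 * σ₀) (hσ₀1 : σ₀ < 1) :
    1 / 2 * max 0 (1 - θ - u) + 1 / 2 * max 0 (1 - θ - v) ≤ (1 - u - v) * (1 - σ₀) := by
  rcases le_total (1 - θ - u) 0 with hcu | hcu <;>
    rcases le_total (1 - θ - v) 0 with hcv | hcv <;>
    simp only [max_eq_left, max_eq_right, hcu, hcv] <;>
    linarith [mul_nonneg (sub_nonneg.2 hA1u) (sub_nonneg.2 hσ₀1.le)]

theorem stmt_15_general (θ σ₀ u v : ℝ) (A : ℝ → ℝ)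
    (hθ1 : θ < 1) (hσ₀ : 1 / 2 < σ₀) (hσ₀1 : σ₀ < 1)
    (hθ4 : θ ≤ (3 - 2 * σ₀) / (7 - 6 * σ₀))
    (hA_anti : AntitoneOn A (Icc σ₀ 1))
    (hAσ₀ : A σ₀ = 1 / (2 * (1 - σ₀)))
    (hA1l : (2 * σ₀ - 2 * θ) / (2 * σ₀ - 1) ≤ u + v) (hA1u : u + v ≤ 1)   -- (A1)
    (hA2 : u * (2 - 2 * σ₀) + v * (1 - 2 * σ₀) ≤ θ + 1 - 2 * σ₀)          -- (A2)
    (hA3 : v * (2 - 2 * σ₀) + u * (1 - 2 * σ₀) ≤ θ + 1 - 2 * σ₀) :        -- (A3)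
    ∀ σ : ℝ, σ₀ ≤ σ → σ < 1 →
      1 / 2 * max 0 ((1 - θ) * (1 / 2 + A σ * (1 - σ)) - u)
        + 1 / 2 * max 0 ((1 - θ) * (1 / 2 + A σ * (1 - σ)) - v)
        ≤ (1 - u - v) * (1 - σ) := by
  intro σ hσ hσ1
  have hs : 0 < 1 - σ₀ := by linarith
  have hθ4' : θ * (7 - 6 * σ₀) ≤ 3 - 2 * σ₀ := (le_div_iff₀ (by linarith)).mp hθ4
  have hA1l' : 2 * σ₀ - 2 * θ ≤ (u + v) * (2 * σ₀ - 1) := (div_le_iff₀ (by linarith)).mp hA1l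
  set l := (1 - σ) / (1 - σ₀) with hl
  have hl₀ : 0 ≤ l := div_nonneg (by linarith) hs.le
  have hl₁ : l ≤ 1 := (div_le_one hs).mpr (by linarith)
  have hAσ : A σ ≤ 1 / (2 * (1 - σ₀)) :=
    hAσ₀ ▸ hA_anti ⟨le_rfl, hσ₀1.le⟩ ⟨hσ, hσ1.le⟩ hσ
  have hAt : A σ * (1 - σ) ≤ l / 2 :=
    calc A σ * (1 - σ) ≤ 1 / (2 * (1 - σ₀)) * (1 - σ) := by gcongr
      _ = l / 2 := by rw [hl]; field_simp
  have hE : (1 - θ) * (1 / 2 + A σ * (1 - σ)) ≤ (1 - l) * ((1 - θ) / 2) + l * (1 - θ) := by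
    linarith [mul_le_mul_of_nonneg_left hAt (sub_nonneg.2 hθ1.le)]
  have hu : (1 - θ) / 2 ≤ u := by
    linarith [one_sub_le_two_mul_of_constraints hσ₀ hσ₀1 hθ4' hA1l' hA3]
  have hv : (1 - θ) / 2 ≤ v := by
    linarith [one_sub_le_two_mul_of_constraints hσ₀ hσ₀1 hθ4' (by linarith) hA2]
  calc _ ≤ l * (1 / 2 * max 0 (1 - θ - u) + 1 / 2 * max 0 (1 - θ - v)) := by
        linarith [max_zero_sub_le_mul_max_zero_sub hl₀ hl₁ hu hE,
          max_zero_sub_le_mul_max_zero_sub hl₀ hl₁ hv hE]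
    _ ≤ l * ((1 - u - v) * (1 - σ₀)) := mul_le_mul_of_nonneg_left
          (half_max_add_half_max_le_of_constraints hA1l' hA1u hA2 hA3 hσ₀1) hl₀
    _ = (1 - u - v) * (1 - σ) := by rw [hl]; field_simp

/-- Case 2 (`σ₀ ≤ σ < 1`) of the exponent inequality in Lemma 3.1. -/
theorem stmt_15 (θ σ₀ u v : ℝ) (A : ℝ → ℝ)
    (hθ : 1 / 2 ≤ θ) (hθ1 : θ < 1) (hσ₀ : 1 / 2 < σ₀) (hσ₀1 : σ₀ < 1)
    (hθ4 : θ ≤ (3 - 2 * σ₀) / (7 - 6 * σ₀))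
    (hA_nonneg : ∀ σ : ℝ, σ₀ ≤ σ → σ ≤ 1 → 0 ≤ A σ)
    (hA_anti : AntitoneOn A (Icc σ₀ 1))
    (hAσ₀ : A σ₀ = 1 / (2 * (1 - σ₀)))
    (hu : 0 ≤ u) (hv : 0 ≤ v)
    (hA1l : (2 * σ₀ - 2 * θ) / (2 * σ₀ - 1) ≤ u + v) (hA1u : u + v ≤ 1)   -- (A1)
    (hA2 : u * (2 - 2 * σ₀) + v * (1 - 2 * σ₀) ≤ θ + 1 - 2 * σ₀)          -- (A2)
    (hA3 : v * (2 - 2 * σ₀) + u * (1 - 2 * σ₀) ≤ θ + 1 - 2 * σ₀) :        -- (A3)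
    ∀ σ : ℝ, σ₀ ≤ σ → σ < 1 →
      1 / 2 * max 0 ((1 - θ) * (1 / 2 + A σ * (1 - σ)) - u)
        + 1 / 2 * max 0 ((1 - θ) * (1 / 2 + A σ * (1 - σ)) - v)
        ≤ (1 - u - v) * (1 - σ) :=
  stmt_15_general θ σ₀ u v A hθ1 hσ₀ hσ₀1 hθ4 hA_anti hAσ₀ hA1l hA1u hA2 hA3
end
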